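/- arXiv:1206.5977 — 2 statements merged into one kernel-verified Lean document; each statement's English description precedes it below -/
import Mathlib

section
/- Let α > 0 and β be real numbers with α ≠ 1, and suppose that α, (α^2 β + 1)/α, and (α^3 + β)/α are all integers. Then there is no such pair (α, β); more precisely, the hypotheses α ∈ ℤ, β + 1/α ∈ ℤ, α^2 + β/α ∈ ℤ, α > 0, α ≠ 1 are contradictory. -/
/-!
Clearing denominators, the two integrality conditions give `α²β + 1 = bα` and `α³ + β = cα`;
eliminating `β` yields `α (b - cα² + α⁴) = 1`. So the positive integer `α` divides `1`,
forcing `α = 1`.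
-/

theorem mul_eq_one_of_sq_mul_add_one_eq_of_pow_three_add_eq {R : Type*} [CommRing R]
    {α β b c : R} (hb : α ^ 2 * β + 1 = b * α) (hc : α ^ 3 + β = c * α) :
    α * (b - c * α ^ 2 + α ^ 4) = 1 := by
  linear_combination -hb + α ^ 2 * hc

theorem no_lattice_g611 (α β : ℝ) (hα : 0 < α) (hα1 : α ≠ 1)
    (h1 : ∃ a : ℤ, α = (a : ℝ))
    (h2 : ∃ b : ℤ, (α ^ 2 * β + 1) / α = (b : ℝ))
    (h3 : ∃ c : ℤ, (α ^ 3 + β) / α = (c : ℝ)) :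
    False := by
  obtain ⟨a, rfl⟩ := h1
  obtain ⟨b, hb⟩ := h2
  obtain ⟨c, hc⟩ := h3
  rw [div_eq_iff hα.ne'] at hb hc
  have hunit : a * (b - c * a ^ 2 + a ^ 4) = 1 := by
    exact_mod_cast mul_eq_one_of_sq_mul_add_one_eq_of_pow_three_add_eq hb hc
  have ha : a = 1 := Int.eq_one_of_dvd_one (by exact_mod_cast hα.le) (Dvd.intro _ hunit)
  exact hα1 (by simp [ha])
end

section
/- Consider the 6-dimensional real Lie algebra g̃ with basis X₁,…,X₆ and only nonzero bracket [X₂, X₆] = X₁ (so g̃ ≅ g_{3.1} ⊕ ℝ³, the Heisenberg algebra times ℝ³). Its Chevalley–Eilenberg cohomology has Betti numbers b₁ = 5, b₂ = 11, b₃ = 14. -/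
/-!
STATEMENT 8: The 6-dimensional real Lie algebra g̃ with basis X₁,…,X₆ and only nonzero
bracket [X₂,X₆] = X₁ (≅ g_{3.1} ⊕ ℝ³) has Chevalley–Eilenberg Betti numbers
b₁ = 5, b₂ = 11, b₃ = 14.

We model the Chevalley–Eilenberg complex concretely: the exterior algebra Λ(α¹,…,α⁶)
on the dual basis is realized as `Lam := Finset (Fin 6) → ℝ` (coordinates with respect to
the basis α^S = α^{s₁} ∧ ⋯ ∧ α^{s_k}, s₁ < ⋯ < s_k, for S = {s₁,…,s_k}); `wedge` is the
exterior product, and the CE differential is the antiderivation `ceDiff g` determined by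
its values `g i = dαⁱ` on the degree-one generators, extended by the graded Leibniz rule
d(αⁱ ∧ ω) = dαⁱ ∧ ω − αⁱ ∧ dω.  Here dα¹ = −α²∧α⁶ (from dα(X,Y) = −α([X,Y])) and
dαⁱ = 0 for i ≠ 1.  The k-th Betti number is
dim(ker d ∩ Λᵏ) − dim d(Λᵏ⁻¹).
-/

open Finset Module

/-- The exterior algebra on six degree-one generators α¹,…,α⁶, as coordinates on the
basis of increasing wedge monomials indexed by subsets of `Fin 6`. -/
abbrev Lam : Type := Finset (Fin 6) → ℝ

/-- The basis monomial α^S. -/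
noncomputable def gen (S : Finset (Fin 6)) : Lam := Pi.single S 1

/-- Koszul sign when interleaving (the increasing enumerations of) `T` and `U`:
(−1) to the number of inversions. -/
def koszulSign (T U : Finset (Fin 6)) : ℝ :=
  (-1 : ℝ) ^ (((T ×ˢ U).filter fun p => p.2 < p.1).card)

/-- The wedge (exterior) product in coordinates. -/
noncomputable def wedge (f h : Lam) : Lam := fun S =>
  ∑ T ∈ S.powerset, koszulSign T (S \ T) * f T * h (S \ T)

/-- The Chevalley–Eilenberg differential: the unique antiderivation with dαⁱ = g i,
given on the basis monomial α^S by d α^S = Σ_{i ∈ S} (−1)^{#{j ∈ S | j < i}} (g i) ∧ α^{S∖i}. -/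
noncomputable def ceDiff (g : Fin 6 → Lam) : Lam →ₗ[ℝ] Lam :=
  (Pi.basisFun ℝ (Finset (Fin 6))).constr ℝ fun S =>
    ∑ i ∈ S, ((-1 : ℝ) ^ ((S.filter fun j => j < i).card)) • wedge (g i) (gen (S.erase i))

/-- The subspace Λᵏ of homogeneous elements of degree `k`. -/
def degSub (k : ℕ) : Submodule ℝ Lam where
  carrier := {f | ∀ S : Finset (Fin 6), S.card ≠ k → f S = 0}
  add_mem' := by
    intro f g hf hg S hS
    simp only [Pi.add_apply, hf S hS, hg S hS, add_zero]
  zero_mem' := by intro S hS; rfl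
  smul_mem' := by
    intro c f hf S hS
    simp only [Pi.smul_apply, hf S hS, smul_zero]

/-- Closed k-forms. -/
noncomputable def Zspace (D : Lam →ₗ[ℝ] Lam) (k : ℕ) : Submodule ℝ Lam :=
  degSub k ⊓ LinearMap.ker D

/-- Exact k-forms. -/
noncomputable def Bspace (D : Lam →ₗ[ℝ] Lam) (k : ℕ) : Submodule ℝ Lam :=
  (degSub (k - 1)).map D

/-- Generator differentials of g̃ ≅ g_{3.1} ⊕ ℝ³: dα¹ = −α²⁶, all other dαⁱ = 0
(indices shifted down by one: αⁱ ↔ i−1). -/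
noncomputable def gDiff : Fin 6 → Lam := ![-gen {1, 5}, 0, 0, 0, 0, 0]

/-!
In the monomial basis the differential is a weighted partial permutation. Only dα¹ is nonzero, so
d α^S = −α²⁶ ∧ α^{S∖1} if α¹ occurs in α^S and d α^S = 0 otherwise; hence d sends α^S to
±α^{{2,6} ∪ S∖1} when 1 ∈ S and 2, 6 ∉ S, kills all other monomials, and S ↦ {2,6} ∪ S∖1 is
injective on these active S. So the closed k-forms are spanned by the inactive k-monomials and the
exact k-forms by the images of the active (k−1)-monomials, and b_k = C(6,k) − a_k − a_{k−1}, where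
a_k = C(3,k−1) counts the active k-monomials: b₁ = 6 − 1 − 0, b₂ = 15 − 3 − 1, b₃ = 20 − 3 − 3.
Indices in Lean are shifted down by one, as in `gDiff`: α¹ is the generator `0`.
-/

section SupportedOn

variable {ι K : Type*} [Field K]

def supportedOn (s : Finset ι) : Submodule K (ι → K) :=
  ⨅ i ∈ (↑s : Set ι)ᶜ, LinearMap.ker (LinearMap.proj i : (ι → K) →ₗ[K] K)

lemma mem_supportedOn {s : Finset ι} {f : ι → K} :
    f ∈ supportedOn s ↔ ∀ i ∉ s, f i = 0 := by
  simp [supportedOn]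

lemma single_mem_supportedOn [DecidableEq ι] {s : Finset ι} {i : ι} (hi : i ∈ s) (x : K) :
    Pi.single i x ∈ supportedOn s :=
  mem_supportedOn.2 fun _ hj => Pi.single_eq_of_ne (ne_of_mem_of_not_mem hi hj).symm _

lemma supportedOn_inf_supportedOn [DecidableEq ι] (s t : Finset ι) :
    supportedOn s ⊓ supportedOn t = (supportedOn (s ∩ t) : Submodule K (ι → K)) := by
  ext f
  simp only [Submodule.mem_inf, mem_supportedOn, Finset.mem_inter]
  grind

lemma finrank_supportedOn [Fintype ι] [DecidableEq ι] (s : Finset ι) :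
    finrank K (supportedOn s : Submodule K (ι → K)) = #s :=
  (LinearMap.iInfKerProjEquiv K (fun _ => K) disjoint_compl_right (by simp)).finrank_eq.trans
    (by simp)

lemma supportedOn_le_iff [DecidableEq ι] {s : Finset ι} {p : Submodule K (ι → K)} :
    supportedOn s ≤ p ↔ ∀ i ∈ s, ∀ x, Pi.single i x ∈ p := by
  rw [supportedOn, ← LinearMap.iSup_range_single_eq_iInf_ker_proj K (fun _ => K) isCompl_compl
    s.finite_toSet, iSup₂_le_iff]
  simp [SetLike.le_def]

end SupportedOn

section MonomialMap

variable {ι K : Type*} [DecidableEq ι] [Field K]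

def IsMonomialMap (D : (ι → K) →ₗ[K] (ι → K)) (A : Finset ι) (σ : ι → ι) (c : ι → K) : Prop :=
  ∀ i, D (Pi.single i 1) = if i ∈ A then c i • Pi.single (σ i) 1 else 0

namespace IsMonomialMap

variable [Fintype ι] {D : (ι → K) →ₗ[K] (ι → K)} {A : Finset ι} {σ : ι → ι} {c : ι → K}

lemma apply_eq_sum (hD : IsMonomialMap D A σ c) (f : ι → K) :
    D f = ∑ i ∈ A, (f i * c i) • Pi.single (σ i) 1 := by
  conv_lhs => rw [pi_eq_sum_univ' f]
  simp [map_sum, hD _, smul_ite, smul_smul, Finset.sum_ite_mem]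

lemma apply_apply (hD : IsMonomialMap D A σ c) (hσ : Set.InjOn σ A) {j : ι} (hj : j ∈ A)
    (f : ι → K) : D f (σ j) = c j * f j := by
  rw [hD.apply_eq_sum, Finset.sum_apply, Finset.sum_eq_single_of_mem j hj]
  · simp [mul_comm]
  · intro i hi hij
    simp [hσ.ne (Finset.mem_coe.2 hj) (Finset.mem_coe.2 hi) (Ne.symm hij)]

lemma ker_eq (hD : IsMonomialMap D A σ c) (hσ : Set.InjOn σ A) (hc : ∀ i ∈ A, c i ≠ 0) :
    LinearMap.ker D = supportedOn Aᶜ := by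
  ext f
  rw [LinearMap.mem_ker, mem_supportedOn]
  simp only [Finset.mem_compl, not_not]
  constructor
  · intro hf i hi
    simpa [hf, hc i hi] using (hD.apply_apply hσ hi f).symm
  · intro hf
    rw [hD.apply_eq_sum]
    exact Finset.sum_eq_zero fun i hi => by simp [hf i hi]

lemma map_supportedOn (hD : IsMonomialMap D A σ c) (hc : ∀ i ∈ A, c i ≠ 0) (s : Finset ι) :
    (supportedOn s).map D = supportedOn ((s ∩ A).image σ) := by
  apply le_antisymm
  · rintro _ ⟨f, hf, rfl⟩
    rw [SetLike.mem_coe, mem_supportedOn] at hf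
    rw [hD.apply_eq_sum]
    refine Submodule.sum_mem _ fun i hi => ?_
    by_cases his : i ∈ s
    · exact Submodule.smul_mem _ _
        (single_mem_supportedOn (Finset.mem_image_of_mem σ (Finset.mem_inter.2 ⟨his, hi⟩)) 1)
    · simp [hf i his]
  · rw [supportedOn_le_iff]
    simp only [Finset.mem_image, Finset.mem_inter]
    rintro _ ⟨i, ⟨his, hiA⟩, rfl⟩ x
    refine ⟨(x / c i) • Pi.single i 1, Submodule.smul_mem _ _ (single_mem_supportedOn his 1), ?_⟩
    rw [map_smul, hD, if_pos hiA, smul_smul, div_mul_cancel₀ x (hc i hiA), ← Pi.single_smul',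
      smul_eq_mul, mul_one]

end IsMonomialMap

end MonomialMap

lemma zero_wedge (h : Lam) : wedge 0 h = 0 := by
  funext S
  simp [wedge]

lemma neg_wedge (f h : Lam) : wedge (-f) h = -wedge f h := by
  funext S
  simp [wedge, Finset.sum_neg_distrib]

lemma wedge_gen_gen (T U : Finset (Fin 6)) :
    wedge (gen T) (gen U) = if Disjoint T U then koszulSign T U • gen (T ∪ U) else 0 := by
  funext V
  have hsplit : (T ⊆ V ∧ V \ T = U) ↔ (Disjoint T U ∧ V = T ∪ U) := by
    constructor
    · rintro ⟨hTV, rfl⟩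
      exact ⟨Finset.disjoint_sdiff, (Finset.union_sdiff_of_subset hTV).symm⟩
    · rintro ⟨hTU, rfl⟩
      exact ⟨Finset.subset_union_left, Finset.union_sdiff_cancel_left hTU⟩
  rw [wedge]
  by_cases hV : T ⊆ V ∧ V \ T = U
  · obtain ⟨hTU, rfl⟩ := hsplit.1 hV
    rw [Finset.sum_eq_single_of_mem T (Finset.mem_powerset.2 hV.1)]
    · simp [hV.2, hTU, gen]
    · intro T' _ hT'
      simp [gen, hT']
  · rw [Finset.sum_eq_zero]
    · by_cases hTU : Disjoint T U
      · have hVTU : V ≠ T ∪ U := fun h => hV (hsplit.2 ⟨hTU, h⟩)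
        simp [hTU, gen, hVTU]
      · simp [hTU]
    · intro T' hT'
      by_cases h : T' = T
      · subst h
        have : V \ T' ≠ U := fun h => hV ⟨Finset.mem_powerset.1 hT', h⟩
        simp [gen, this]
      · simp [gen, h]

def gDiffActive : Finset (Finset (Fin 6)) := {S | 0 ∈ S ∧ 1 ∉ S ∧ 5 ∉ S}

def gDiffTarget (S : Finset (Fin 6)) : Finset (Fin 6) := {1, 5} ∪ S.erase 0

noncomputable def gDiffCoeff (S : Finset (Fin 6)) : ℝ := -koszulSign {1, 5} (S.erase 0)

lemma isMonomialMap_ceDiff_gDiff :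
    IsMonomialMap (ceDiff gDiff) gDiffActive gDiffTarget gDiffCoeff := by
  intro S
  have hvanish : ∀ i ≠ 0, gDiff i = 0 := by
    intro i hi
    fin_cases i <;> first | exact absurd rfl hi | rfl
  rw [show Pi.single S 1 = Pi.basisFun ℝ _ S from (Pi.basisFun_apply ..).symm, ceDiff,
    Basis.constr_basis]
  by_cases h0 : (0 : Fin 6) ∈ S
  · rw [Finset.sum_eq_single_of_mem 0 h0 fun i _ hi => by rw [hvanish i hi, zero_wedge, smul_zero]]
    have hdisj : Disjoint {1, 5} (S.erase 0) ↔ 1 ∉ S ∧ 5 ∉ S := by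
      simp [Finset.disjoint_insert_left]
    simp only [Fin.not_lt_zero, Finset.filter_false, Finset.card_empty, pow_zero, one_smul]
    rw [show gDiff 0 = -gen {1, 5} from rfl, neg_wedge, wedge_gen_gen]
    by_cases h15 : 1 ∉ S ∧ 5 ∉ S
    · simp [gDiffActive, gDiffCoeff, gDiffTarget, gen, h0, h15, hdisj.2 h15]
    · simp [gDiffActive, h0, h15, mt hdisj.1 h15]
  · rw [Finset.sum_eq_zero fun i hi => by
      rw [hvanish i (ne_of_mem_of_not_mem hi h0), zero_wedge, smul_zero]]
    simp [gDiffActive, h0]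

lemma gDiffTarget_injOn : Set.InjOn gDiffTarget gDiffActive := by
  refine Set.LeftInvOn.injOn (f₁' := fun T => insert 0 (T \ {1, 5})) fun S hS => ?_
  obtain ⟨h0, h1, h5⟩ : 0 ∈ S ∧ 1 ∉ S ∧ 5 ∉ S := by simpa [gDiffActive] using hS
  have hsdiff : ({1, 5} ∪ S.erase 0) \ {1, 5} = S.erase 0 := by
    ext x
    simp only [Finset.mem_sdiff, Finset.mem_union, Finset.mem_insert, Finset.mem_singleton,
      Finset.mem_erase]
    grind
  simp only [gDiffTarget, hsdiff, Finset.insert_erase h0]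

lemma gDiffCoeff_ne_zero (S : Finset (Fin 6)) : gDiffCoeff S ≠ 0 := by
  simp [gDiffCoeff, koszulSign]

lemma degSub_eq_supportedOn (k : ℕ) : degSub k = supportedOn (powersetCard k univ) := by
  ext f
  simp [degSub, mem_supportedOn]

lemma Zspace_ceDiff_gDiff (k : ℕ) :
    Zspace (ceDiff gDiff) k = supportedOn (powersetCard k univ ∩ gDiffActiveᶜ) := by
  rw [Zspace, degSub_eq_supportedOn, isMonomialMap_ceDiff_gDiff.ker_eq gDiffTarget_injOn
    fun S _ => gDiffCoeff_ne_zero S, supportedOn_inf_supportedOn]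

lemma Bspace_ceDiff_gDiff (k : ℕ) :
    Bspace (ceDiff gDiff) k =
      supportedOn ((powersetCard (k - 1) univ ∩ gDiffActive).image gDiffTarget) := by
  rw [Bspace, degSub_eq_supportedOn, isMonomialMap_ceDiff_gDiff.map_supportedOn
    fun S _ => gDiffCoeff_ne_zero S]

theorem betti_g31_oplus_R3 :
    finrank ℝ (Zspace (ceDiff gDiff) 1) = finrank ℝ (Bspace (ceDiff gDiff) 1) + 5 ∧
    finrank ℝ (Zspace (ceDiff gDiff) 2) = finrank ℝ (Bspace (ceDiff gDiff) 2) + 11 ∧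
    finrank ℝ (Zspace (ceDiff gDiff) 3) = finrank ℝ (Bspace (ceDiff gDiff) 3) + 14 := by
  rw [Zspace_ceDiff_gDiff, Zspace_ceDiff_gDiff, Zspace_ceDiff_gDiff,
    Bspace_ceDiff_gDiff, Bspace_ceDiff_gDiff, Bspace_ceDiff_gDiff]
  simp only [finrank_supportedOn]
  decide
end
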